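/- Let $G$ be a group, $P \leq G$ a subgroup, $U \trianglelefteq P$ a normal subgroup and $L \leq P$ a subgroup with $P = U \rtimes L$ (i.e. $P = UL$ and $U \cap L = 1$). Let $S \leq P$ be a subgroup containing $U$, and set $H = S \cap L$. Then for any commutative ring $R$ and any $R[L]$-module $N$, there is an isomorphism of $R[S]$-modules $\mathrm{Res}^P_S \mathrm{Ind}_L^P N \cong \mathrm{Ind}_H^S \mathrm{Res}^L_H N$. -/

import Mathlib

section
variable (R : Type*) [CommRing R] {P : Type*} [Group P]
variable (L S : Subgroup P)
variable (N : Type*) [AddCommGroup N] [Module R N] (ρ : Representation R L N)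

/-- The relations defining the induced module `Ind_L^P N` as a quotient of the free
module `⊕_{p ∈ P} N`: `(p·l) ⊗ n ∼ p ⊗ (l · n)`. -/
noncomputable def indRelP : Submodule R (P →₀ N) :=
  Submodule.span R {w | ∃ (p : P) (l : L) (n : N),
    w = Finsupp.single (p * (l : P)) n - Finsupp.single p (ρ l n)}

/-- The induced module `Ind_L^P N`. -/
def IndP := (P →₀ N) ⧸ indRelP R L N ρ

noncomputable instance : AddCommGroup (IndP R L N ρ) := inferInstanceAs (AddCommGroup ((P →₀ N) ⧸ _))
noncomputable instance : Module R (IndP R L N ρ) := inferInstanceAs (Module R ((P →₀ N) ⧸ _))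

/-- The relations defining `Ind_H^S (Res^L_H N)`, where `H = S ⊓ L`:
`(s·h) ⊗ n ∼ s ⊗ (h · n)` for `h ∈ S` lying in `L`. -/
noncomputable def indRelS : Submodule R ((S : Type _) →₀ N) :=
  Submodule.span R {w | ∃ (s h : S) (hh : (h : P) ∈ L) (n : N),
    w = Finsupp.single (s * h) n - Finsupp.single s (ρ ⟨(h : P), hh⟩ n)}

/-- The induced module `Ind_H^S (Res^L_H N)` with `H = S ⊓ L`. -/
def IndS := ((S : Type _) →₀ N) ⧸ indRelS R L S N ρ

noncomputable instance : AddCommGroup (IndS R L S N ρ) :=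
  inferInstanceAs (AddCommGroup (((S : Type _) →₀ N) ⧸ _))
noncomputable instance : Module R (IndS R L S N ρ) :=
  inferInstanceAs (Module R (((S : Type _) →₀ N) ⧸ _))

end

/-!
Since `U` is normal, `U ⊔ L = U * L`, so `U ≤ S` gives `P = S * L`: there is a single
`(S, L)` double coset. Writing `p = s * l` with `s ∈ S`, `l ∈ L`, the map
`p ⊗ n ↦ s ⊗ (l • n)` is independent of the factorization, because two factorizations differ
by an element of `S ⊓ L`, which can be moved across the tensor sign in `Ind_{S ⊓ L}^S`.
It inverts the obvious map `Ind_{S ⊓ L}^S N → Ind_L^P N`, `s ⊗ n ↦ s ⊗ n`, which commutes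
with left translation.
-/

open Finsupp

theorem Subgroup.exists_mul_eq_of_normal_sup_eq_top {P : Type*} [Group P]
    {U L S : Subgroup P} [U.Normal] (hP : U ⊔ L = ⊤) (hUS : U ≤ S) (p : P) :
    ∃ (s : S) (l : L), (s : P) * l = p := by
  obtain ⟨u, hu, l, hl, rfl⟩ := mem_sup_of_normal_left.1 (hP ▸ mem_top p)
  exact ⟨⟨u, hUS hu⟩, ⟨l, hl⟩, rfl⟩

section
variable {R : Type*} [CommRing R] {P : Type*} [Group P] {L S : Subgroup P}
  {N : Type*} [AddCommGroup N] [Module R N] {ρ : Representation R L N}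

theorem IndP.mk_single_mul (p : P) (l : L) (n : N) :
    (Submodule.Quotient.mk (single (p * l) n) : IndP R L N ρ) =
      Submodule.Quotient.mk (single p (ρ l n)) :=
  (Submodule.Quotient.eq _).2 (Submodule.subset_span ⟨p, l, n, rfl⟩)

theorem indRelP_le_comap_mapDomain_mul_left (q : P) :
    indRelP R L N ρ ≤ (indRelP R L N ρ).comap (lmapDomain N R (q * ·)) := by
  rw [indRelP, Submodule.span_le]
  rintro _ ⟨p, l, n, rfl⟩
  simp only [SetLike.mem_coe, Submodule.mem_comap, map_sub, lmapDomain_apply, mapDomain_single,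
    ← mul_assoc]
  exact Submodule.subset_span ⟨q * p, l, n, rfl⟩

theorem IndP.mk_mapDomain_mul_left_eq (q : P) {x x' : P →₀ N}
    (h : (Submodule.Quotient.mk x : IndP R L N ρ) = Submodule.Quotient.mk x') :
    (Submodule.Quotient.mk (mapDomain (q * ·) x) : IndP R L N ρ) =
      Submodule.Quotient.mk (mapDomain (q * ·) x') := by
  rw [Submodule.Quotient.eq] at h ⊢
  simpa [mapDomain_sub] using indRelP_le_comap_mapDomain_mul_left q h

theorem IndS.mk_single_mul (s h : S) (hh : (h : P) ∈ L) (n : N) :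
    (Submodule.Quotient.mk (single (s * h) n) : IndS R L S N ρ) =
      Submodule.Quotient.mk (single s (ρ ⟨h, hh⟩ n)) :=
  (Submodule.Quotient.eq _).2 (Submodule.subset_span ⟨s, h, hh, n, rfl⟩)

theorem IndS.mk_single_eq_of_mul_eq {s s' : S} {l l' : L} (h : (s : P) * l = s' * l') (n : N) :
    (Submodule.Quotient.mk (single s (ρ l n)) : IndS R L S N ρ) =
      Submodule.Quotient.mk (single s' (ρ l' n)) := by
  have hk : ((s'⁻¹ * s : S) : P) = l' * l⁻¹ := by
    rw [Subgroup.coe_mul, Subgroup.coe_inv, inv_mul_eq_iff_eq_mul, ← mul_assoc, ← h]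
    simp
  have hkL : ((s'⁻¹ * s : S) : P) ∈ L := hk ▸ mul_mem l'.2 (inv_mem l.2)
  have hl' : (⟨_, hkL⟩ : L) * l = l' := Subtype.ext (by simp [hk])
  rw [← mul_inv_cancel_left s' s, IndS.mk_single_mul _ _ hkL, ← Module.End.mul_apply,
    ← map_mul, hl']

theorem indRelS_le_comap_indRelP :
    indRelS R L S N ρ ≤ (indRelP R L N ρ).comap (lmapDomain N R Subtype.val) := by
  rw [indRelS, Submodule.span_le]
  rintro _ ⟨s, h, hh, n, rfl⟩
  simp only [SetLike.mem_coe, Submodule.mem_comap, map_sub, lmapDomain_apply, mapDomain_single,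
    Subgroup.coe_mul]
  exact Submodule.subset_span ⟨s, ⟨h, hh⟩, n, rfl⟩

variable (S ρ) in
noncomputable def IndS.toIndP : IndS R L S N ρ →ₗ[R] IndP R L N ρ :=
  Submodule.mapQ _ _ (lmapDomain N R Subtype.val) indRelS_le_comap_indRelP

theorem IndS.toIndP_mk (y : S →₀ N) :
    IndS.toIndP S ρ (Submodule.Quotient.mk y) =
      Submodule.Quotient.mk (mapDomain Subtype.val y) :=
  rfl

section
variable (hSL : ∀ p : P, ∃ (s : S) (l : L), (s : P) * l = p)

variable (ρ) in
noncomputable def IndP.toIndSFree : (P →₀ N) →ₗ[R] IndS R L S N ρ :=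
  lsum R fun p => (indRelS R L S N ρ).mkQ ∘ₗ lsingle (hSL p).choose ∘ₗ
    ρ (hSL p).choose_spec.choose

theorem IndP.toIndSFree_single {p : P} {s : S} {l : L} (h : (s : P) * l = p) (n : N) :
    IndP.toIndSFree ρ hSL (single p n) = Submodule.Quotient.mk (single s (ρ l n)) := by
  rw [IndP.toIndSFree, lsum_single]
  exact IndS.mk_single_eq_of_mul_eq ((hSL p).choose_spec.choose_spec.trans h.symm) n

variable (ρ) in
noncomputable def IndP.toIndS : IndP R L N ρ →ₗ[R] IndS R L S N ρ :=
  (indRelP R L N ρ).liftQ (IndP.toIndSFree ρ hSL) <| by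
    rw [indRelP, Submodule.span_le]
    rintro _ ⟨p, l, n, rfl⟩
    obtain ⟨s, l₀, rfl⟩ := hSL p
    rw [SetLike.mem_coe, LinearMap.mem_ker, map_sub, sub_eq_zero,
      IndP.toIndSFree_single hSL (s := s) (l := l₀ * l) (mul_assoc _ _ _).symm,
      IndP.toIndSFree_single hSL rfl, map_mul, Module.End.mul_apply]

theorem IndP.toIndS_mk_single {p : P} {s : S} {l : L} (h : (s : P) * l = p) (n : N) :
    IndP.toIndS ρ hSL (Submodule.Quotient.mk (single p n)) =
      Submodule.Quotient.mk (single s (ρ l n)) :=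
  IndP.toIndSFree_single hSL h n

variable (ρ) in
noncomputable def IndS.equivIndP : IndS R L S N ρ ≃ₗ[R] IndP R L N ρ :=
  LinearEquiv.ofLinearMap (IndS.toIndP S ρ) (IndP.toIndS ρ hSL)
    (by
      refine Submodule.linearMap_qext _ (lhom_ext' fun p => LinearMap.ext fun n => ?_)
      obtain ⟨s, l, rfl⟩ := hSL p
      change IndS.toIndP S ρ (IndP.toIndS ρ hSL (Submodule.Quotient.mk (single _ n))) =
        Submodule.Quotient.mk (single _ n)
      rw [IndP.toIndS_mk_single hSL rfl, IndS.toIndP_mk, mapDomain_single]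
      exact (IndP.mk_single_mul _ _ n).symm)
    (by
      refine Submodule.linearMap_qext _ (lhom_ext' fun s => LinearMap.ext fun n => ?_)
      change IndP.toIndS ρ hSL (IndS.toIndP S ρ (Submodule.Quotient.mk (single s n))) =
        Submodule.Quotient.mk (single s n)
      rw [IndS.toIndP_mk, mapDomain_single, IndP.toIndS_mk_single hSL (l := 1) (mul_one _),
        map_one, Module.End.one_apply])

end

end

theorem mackey_res_ind_single_coset
    (R : Type*) [CommRing R] (P : Type*) [Group P]
    (U L S : Subgroup P) (hU : U.Normal)
    (hP : U ⊔ L = ⊤) (hUS : U ≤ S)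
    (N : Type*) [AddCommGroup N] [Module R N] (ρ : Representation R L N) :
    ∃ e : IndP R L N ρ ≃ₗ[R] IndS R L S N ρ,
      ∀ (s : S) (x : P →₀ N) (y : (S : Type _) →₀ N),
        e (Submodule.Quotient.mk x) = Submodule.Quotient.mk y →
        e (Submodule.Quotient.mk (Finsupp.mapDomain (fun p => (s : P) * p) x)) =
          Submodule.Quotient.mk (Finsupp.mapDomain (fun t => s * t) y) := by
  have hSL := Subgroup.exists_mul_eq_of_normal_sup_eq_top hP hUS
  refine ⟨(IndS.equivIndP ρ hSL).symm, fun s x y hxy => (LinearEquiv.symm_apply_eq _).2 ?_⟩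
  replace hxy := (LinearEquiv.symm_apply_eq _).1 hxy
  change _ = IndS.toIndP S ρ _ at hxy ⊢
  rw [IndS.toIndP_mk] at hxy ⊢
  have hcomm : (Subtype.val ∘ fun t => s * t) = ((s : P) * ·) ∘ Subtype.val := rfl
  rw [← mapDomain_comp, hcomm, mapDomain_comp]
  exact IndP.mk_mapDomain_mul_left_eq (s : P) hxy
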